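/- Let P be an n × m matrix over 𝔽₂ with m > n(n+1)/2 + 1. Then there exists an n × m' matrix P' over 𝔽₂ with m' < m such that |P'_α ∧ P'_β ∧ P'_γ| ≡ |P_α ∧ P_β ∧ P_γ| (mod 2) for all α ≤ β ≤ γ. -/

import Mathlib

/-- Hamming weight of a Boolean vector. -/
def wt {m : ℕ} (v : Fin m → Bool) : ℕ :=
  (Finset.univ.filter (fun i => v i = true)).card

/-!
Over `𝔽₂` the conditions `∑ₖ y_k P_{αk} P_{βk} = 0`, `α ≤ β`, are `n(n+1)/2` linear equations
`A y = 0`, so `ker A` has dimension at least `2` and contains some `y ∉ {0, 1}`. For such `y` and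
any `z`, the update `P + z yᵀ`, completed by the column `|y| z`, keeps every triple parity:
expanding `(P_α + z_α y)(P_β + z_β y)(P_γ + z_γ y)` with `y² = y`, each cross term is a pair
sum against `y`, and the remaining `z_α z_β z_γ |y|` is cancelled by the extra column. With
`z = P_i + P_j`, `y_i = 1`, `y_j = 0`, the columns `i` and `j` become equal, and two equal columns
contribute nothing mod `2`, so deleting them leaves `m - 1` columns.
-/

open Finset Matrix

variable {ι κ κ' : Type*}

theorem Matrix.exists_mulVec_eq_zero_notMem_span_one {K η : Type*} [Field K] [Fintype η]
    [Fintype κ] (A : Matrix η κ K) (h : Fintype.card η + 1 < Fintype.card κ) :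
    ∃ y, A *ᵥ y = 0 ∧ y ∉ K ∙ (1 : κ → K) := by
  by_contra! hker
  have hle : LinearMap.ker A.mulVecLin ≤ K ∙ (1 : κ → K) := fun y hy => hker y hy
  have hspan : Module.finrank K (K ∙ (1 : κ → K)) ≤ 1 := by
    simpa using finrank_span_le_card ({1} : Set (κ → K))
  have hrank : A.rank ≤ Fintype.card η := A.rank_le_card_height
  have hnullity := LinearMap.finrank_range_add_finrank_ker A.mulVecLin
  rw [Module.finrank_fintype_fun_eq_card] at hnullity
  have := Submodule.finrank_mono hle
  rw [Matrix.rank] at hrank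
  omega

theorem ZMod.exists_eq_one_eq_zero_of_notMem_span_one {y : κ → ZMod 2}
    (hy : y ∉ ZMod 2 ∙ (1 : κ → ZMod 2)) : ∃ i j, y i = 1 ∧ y j = 0 := by
  have hcases : ∀ a : ZMod 2, a = 0 ∨ a = 1 := by decide
  by_contra! h
  by_cases hone : ∃ i, y i = 1
  · obtain ⟨i, hi⟩ := hone
    have hy1 : y = 1 := funext fun j => (hcases (y j)).resolve_left (h i j hi)
    rw [hy1] at hy
    exact hy (Submodule.mem_span_singleton_self 1)
  · have hy0 : y = 0 := funext fun j => (hcases (y j)).resolve_right fun hj => hone ⟨j, hj⟩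
    rw [hy0] at hy
    exact hy (Submodule.zero_mem _)

section TripleSum

variable [Fintype κ]

def tripleSum (q : ι → κ → ZMod 2) (α β γ : ι) : ZMod 2 :=
  ∑ k, q α k * q β k * q γ k

theorem tripleSum_comp_equiv [Fintype κ'] (q : ι → κ → ZMod 2) (e : κ' ≃ κ) :
    tripleSum (fun δ => q δ ∘ e) = tripleSum q := by
  funext α β γ
  exact Fintype.sum_equiv e _ _ fun _ => rfl

def pairProducts {R : Type*} [CommMagma R] (q : ι → κ → R) : Matrix (Sym2 ι) κ R :=
  fun p k => Sym2.lift ⟨fun α β => q α k * q β k, fun _ _ => mul_comm _ _⟩ p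

theorem pairProducts_mulVec_mk {R : Type*} [CommSemiring R] (q : ι → κ → R) (y : κ → R)
    (α β : ι) : (pairProducts q *ᵥ y) s(α, β) = ∑ k, y k * q α k * q β k := by
  simp only [mulVec, dotProduct, pairProducts, Sym2.lift_mk]
  exact sum_congr rfl fun k _ => by ring

/-- Column `none` is the extra column `|y| z`; for even `|y|` it is zero, where the paper appends
nothing. -/
def rankOneUpdate (q : ι → κ → ZMod 2) (z : ι → ZMod 2) (y : κ → ZMod 2) :
    ι → Option κ → ZMod 2
  | δ, none => (∑ k, y k) * z δ
  | δ, some k => q δ k + z δ * y k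

-- Idempotence in `𝔽₂` puts every term but the last in the form `t * (pair product)`.
theorem ZMod.two_add_mul_cube_expand (a b c u v w t : ZMod 2) :
    (a + u * t) * (b + v * t) * (c + w * t) =
      a * b * c + u * (t * b * c) + v * (t * a * c) + w * (t * a * b) +
        u * v * (t * c * c) + u * w * (t * b * b) + v * w * (t * a * a) + u * v * w * t := by
  revert a b c u v w t; decide

theorem tripleSum_rankOneUpdate {q : ι → κ → ZMod 2} {y : κ → ZMod 2}
    (hy : pairProducts q *ᵥ y = 0) (z : ι → ZMod 2) :
    tripleSum (rankOneUpdate q z y) = tripleSum q := by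
  have hpair : ∀ α β, ∑ k, y k * q α k * q β k = 0 := fun α β => by
    rw [← pairProducts_mulVec_mk, hy, Pi.zero_apply]
  funext α β γ
  simp only [tripleSum, Fintype.sum_option, rankOneUpdate, ZMod.two_add_mul_cube_expand,
    sum_add_distrib, ← mul_sum, hpair, mul_zero, add_zero]
  -- The extra column contributes `|y|³ z_α z_β z_γ = |y| z_α z_β z_γ`, cancelling the last term.
  have hcancel : ∀ s u v w T : ZMod 2, s * u * (s * v) * (s * w) + (T + u * v * w * s) = T := by
    decide
  exact hcancel _ _ _ _ _

end TripleSum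

section DeleteColumns

variable [Fintype κ] [DecidableEq κ] {i j : κ}

theorem Fintype.card_subtype_ne_and_ne (hij : i ≠ j) :
    Fintype.card {k // k ≠ i ∧ k ≠ j} = Fintype.card κ - 2 := by
  rw [Fintype.card_subtype, ← card_pair hij, ← card_univ, ← card_sdiff_of_subset (subset_univ _)]
  congr 1
  ext k
  simp [not_or]

theorem sum_subtype_ne_and_ne_of_eq {R : Type*} [Ring R] [CharP R 2] {f : κ → R} (hij : i ≠ j)
    (hf : f i = f j) : ∑ t : {k // k ≠ i ∧ k ≠ j}, f t = ∑ k, f k := by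
  rw [← sum_subtype (univ \ {i, j}) (by simp [not_or]), ← sum_sdiff (subset_univ {i, j}),
    sum_pair hij, hf, CharTwo.add_self_eq_zero, add_zero]

theorem tripleSum_subtype_ne_and_ne {q : ι → κ → ZMod 2} (hij : i ≠ j)
    (hcol : ∀ δ, q δ i = q δ j) :
    tripleSum (fun δ (t : {k // k ≠ i ∧ k ≠ j}) => q δ t) = tripleSum q := by
  funext α β γ
  exact sum_subtype_ne_and_ne_of_eq (f := fun k => q α k * q β k * q γ k) hij (by simp only [hcol])

end DeleteColumns

theorem exists_tripleSum_eq_of_card_lt [Fintype ι] [Fintype κ] [DecidableEq κ]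
    (q : ι → κ → ZMod 2) (h : Fintype.card ι * (Fintype.card ι + 1) / 2 + 1 < Fintype.card κ) :
    ∃ m' < Fintype.card κ, ∃ q' : ι → Fin m' → ZMod 2, tripleSum q' = tripleSum q := by
  have hcard : Fintype.card (Sym2 ι) + 1 < Fintype.card κ := by
    rwa [Sym2.card, Nat.choose_two_right, Nat.add_sub_cancel, Nat.mul_comm]
  obtain ⟨y, hy, hy1⟩ := (pairProducts q).exists_mulVec_eq_zero_notMem_span_one hcard
  obtain ⟨i, j, hi, hj⟩ := ZMod.exists_eq_one_eq_zero_of_notMem_span_one hy1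
  have hij : some i ≠ some j := fun h => by simp_all
  set Q := rankOneUpdate q (fun δ => q δ i + q δ j) y
  have hcol : ∀ δ, Q δ (some i) = Q δ (some j) := fun δ => by
    simp only [Q, rankOneUpdate, hi, hj, mul_one, mul_zero, add_zero, ← add_assoc,
      CharTwo.add_self_eq_zero, zero_add]
  let C := {t : Option κ // t ≠ some i ∧ t ≠ some j}
  refine ⟨Fintype.card C, ?_, fun δ => (fun t : C => Q δ t) ∘ (Fintype.equivFin C).symm, ?_⟩
  · rw [Fintype.card_subtype_ne_and_ne hij, Fintype.card_option]
    omega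
  · rw [tripleSum_comp_equiv, tripleSum_subtype_ne_and_ne hij hcol, tripleSum_rankOneUpdate hy]

def Bool.toZMod2 (b : Bool) : ZMod 2 := if b then 1 else 0

theorem Bool.toZMod2_and (a b : Bool) : (a && b).toZMod2 = a.toZMod2 * b.toZMod2 := by
  cases a <;> cases b <;> simp [Bool.toZMod2]

theorem Bool.toZMod2_decide_eq_one (x : ZMod 2) : (decide (x = 1)).toZMod2 = x := by
  revert x; decide

theorem natCast_wt {m : ℕ} (v : Fin m → Bool) : (wt v : ZMod 2) = ∑ i, (v i).toZMod2 := by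
  rw [wt, card_filter]
  push_cast
  rfl

theorem stmt_10 (n m : ℕ) (hm : m > n * (n + 1) / 2 + 1)
    (P : Fin n → Fin m → Bool) :
    ∃ m' : ℕ, m' < m ∧ ∃ P' : Fin n → Fin m' → Bool,
      ∀ α β γ : Fin n, α ≤ β → β ≤ γ →
        wt (fun i => P' α i && P' β i && P' γ i) % 2 =
        wt (fun i => P α i && P β i && P γ i) % 2 := by
  obtain ⟨m', hm', q', hq'⟩ :=
    exists_tripleSum_eq_of_card_lt (fun δ k => (P δ k).toZMod2) (by simpa using hm)
  refine ⟨m', by simpa using hm', fun δ k => decide (q' δ k = 1), fun α β γ _ _ => ?_⟩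
  rw [← ZMod.natCast_eq_natCast_iff', natCast_wt, natCast_wt]
  simpa [Bool.toZMod2_and, Bool.toZMod2_decide_eq_one, tripleSum] using congrFun₃ hq' α β γ
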